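/- Let Γ_1 ≺ Γ_2 ≺ … ≺ Γ_k be a finite inextendible path in convex-covtree. Then the terminal node is a singleton Γ_k = {C_k}, the k-order C_k is a certificate of every node in the path, and any causet that is a certificate of every node in the path is order-isomorphic to C_k; that is, C_k is the unique certificate of the path. -/
import Mathlib


/-- A strict partial order on `Fin n` (a representative of an `n`-order). -/
def FinSPO (n : ℕ) : Type :=
  {r : Fin n → Fin n → Prop // Transitive r ∧ ∀ x : Fin n, ¬ r x x}

/-- Order-isomorphism of representatives. -/
def IsoFin {n : ℕ} (p q : FinSPO n) : Prop :=
  ∃ g : Fin n ≃ Fin n, ∀ a b : Fin n, p.1 a b ↔ q.1 (g a) (g b)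

/-- An `n`-order: an order-isomorphism class of `n`-element strict partial orders. -/
def NOrder (n : ℕ) : Type := Quot (@IsoFin n)

/-- The `n`-order represented by `p`. -/
def toNOrder {n : ℕ} (p : FinSPO n) : NOrder n := Quot.mk _ p

/-- `S` is a (finite) convex subset of the causet `(α, r)`. -/
def IsConvexIn {α : Type*} (r : α → α → Prop) (S : Set α) : Prop :=
  S.Finite ∧ ∀ x ∈ S, ∀ y ∈ S, ∀ z : α, r x z → r z y → z ∈ S

/-- The representative `p` is realised by a convex subset of the causet `(α, r)`. -/
def RepConvex {α : Type*} (r : α → α → Prop) {n : ℕ} (p : FinSPO n) : Prop :=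
  ∃ g : Fin n → α, Function.Injective g ∧ IsConvexIn r (Set.range g) ∧
    ∀ a b : Fin n, p.1 a b ↔ r (g a) (g b)

/-- The set of `n`-convex-suborders of the causet `(α, r)`. -/
def convexSubords {α : Type*} (r : α → α → Prop) (n : ℕ) : Set (NOrder n) :=
  {o | ∃ p : FinSPO n, o = toNOrder p ∧ RepConvex r p}

/-- A (finite or countably infinite) causal set: a countable strict partial order
which is locally finite. -/
structure Causet where
  carrier : Type
  rel : carrier → carrier → Prop
  countable : Countable carrier
  trans : Transitive rel
  irrefl : ∀ x : carrier, ¬ rel x x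
  locFin : ∀ x y : carrier, {z : carrier | rel x z ∧ rel z y}.Finite

/-- `C` is a certificate of `Γ`: the set of `n`-convex-suborders of `C` equals `Γ`. -/
def IsCert (C : Causet) {n : ℕ} (Γ : Set (NOrder n)) : Prop :=
  convexSubords C.rel n = Γ

/-- `Γ` is a node of convex-covtree: it has at least one certificate. -/
def IsNodeCC {n : ℕ} (Γ : Set (NOrder n)) : Prop := ∃ C : Causet, IsCert C Γ

/-- `O⁻(Γ)`: the set of `n`-orders represented by convex subsets of representatives
of members of `Γ`. -/
def Ominus {n : ℕ} (Γ : Set (NOrder (n + 1))) : Set (NOrder n) :=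
  {o | ∃ q : FinSPO n, o = toNOrder q ∧
    ∃ p : FinSPO (n + 1), toNOrder p ∈ Γ ∧ RepConvex p.1 q}

/-- `p` is a chain. -/
def IsChainRep {n : ℕ} (p : FinSPO n) : Prop :=
  ∀ a b : Fin n, a ≠ b → p.1 a b ∨ p.1 b a

/-- `p` is an antichain. -/
def IsAntichainRep {n : ℕ} (p : FinSPO n) : Prop := ∀ a b : Fin n, ¬ p.1 a b

/-- A maximal node: no node `Δ` of `(n+1)`-orders has `O⁻(Δ) = Γ`. -/
def IsMaxNode {n : ℕ} (Γ : Set (NOrder (n + 1))) : Prop :=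
  ¬ ∃ Δ : Set (NOrder (n + 2)), IsNodeCC Δ ∧ Ominus Δ = Γ

/-- An infinite path in convex-covtree: a sequence of nodes `Γ_{m+1} = P m`,
beginning at the level-1 node, with `Γ_n = O⁻(Γ_{n+1})` for all `n ≥ 1`. -/
def InfPath (P : ∀ m : ℕ, Set (NOrder (m + 1))) : Prop :=
  P 0 = Set.univ ∧ (∀ m : ℕ, IsNodeCC (P m)) ∧ ∀ m : ℕ, P m = Ominus (P (m + 1))

/-- A finite inextendible path `Γ_1, …, Γ_{j+1}` in convex-covtree (`Γ_{m+1} = P m`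
for `m ≤ j`): it begins at the level-1 node, consists of nodes, satisfies
`Γ_m = O⁻(Γ_{m+1})`, and terminates at a maximal node. -/
def FinPath (P : ∀ m : ℕ, Set (NOrder (m + 1))) (j : ℕ) : Prop :=
  P 0 = Set.univ ∧ (∀ m : ℕ, m ≤ j → IsNodeCC (P m)) ∧
    (∀ m : ℕ, m < j → P m = Ominus (P (m + 1))) ∧ IsMaxNode (P j)

/-- The causet `C` is order-isomorphic to the representative `p`. -/
def IsoToRep (C : Causet) {n : ℕ} (p : FinSPO n) : Prop :=
  ∃ g : Fin n → C.carrier, Function.Bijective g ∧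
    ∀ a b : Fin n, p.1 a b ↔ C.rel (g a) (g b)

open Function Set

section Aux

variable {α : Type*} {r : α → α → Prop}

lemma exists_min_finset (htr : Transitive r) (hirr : ∀ x : α, ¬ r x x) (T : Finset α) :
    T.Nonempty → ∃ w ∈ T, ∀ v ∈ T, ¬ r v w := by
  classical
  induction T using Finset.strongInduction with
  | _ T ih =>
    rintro ⟨a, ha⟩
    by_cases h : ∃ v ∈ T, r v a
    · obtain ⟨v0, hv0, hr0⟩ := h
      have hss : T.filter (fun v => r v a) ⊂ T :=
        Finset.filter_ssubset.mpr ⟨a, ha, hirr a⟩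
      obtain ⟨w, hw, hwmin⟩ := ih _ hss ⟨v0, Finset.mem_filter.mpr ⟨hv0, hr0⟩⟩
      obtain ⟨hwT, hwa⟩ := Finset.mem_filter.mp hw
      exact ⟨w, hwT, fun v hv hrv => hwmin v (Finset.mem_filter.mpr ⟨hv, htr hrv hwa⟩) hrv⟩
    · push_neg at h
      exact ⟨a, ha, h⟩

lemma convex_extend_one (htr : Transitive r) (hirr : ∀ x : α, ¬ r x x)
    (hloc : ∀ x y : α, {z : α | r x z ∧ r z y}.Finite)
    {S : Set α} (hS : IsConvexIn r S) {x₀ z₀ : α} (hx₀ : x₀ ∈ S) (hz₀ : z₀ ∉ S)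
    (hr₀ : r x₀ z₀) :
    ∃ w ∉ S, IsConvexIn r (insert w S) := by
  classical
  set A : Set α := {z | z ∉ S ∧ ∃ x ∈ S, r x z} with hA
  have hTfin : (insert z₀ {u ∈ A | r u z₀} : Set α).Finite := by
    refine Set.Finite.insert _ ?_
    have hsub : {u ∈ A | r u z₀} ⊆ ⋃ x ∈ S, {u | r x u ∧ r u z₀} := by
      rintro u ⟨⟨-, x, hx, hxu⟩, huz⟩
      exact Set.mem_biUnion hx ⟨hxu, huz⟩
    exact (Set.Finite.biUnion hS.1 (fun x _ => hloc x z₀)).subset hsub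
  obtain ⟨w, hwT, hwmin⟩ := exists_min_finset htr hirr hTfin.toFinset
    ⟨z₀, hTfin.mem_toFinset.mpr (Set.mem_insert _ _)⟩
  have hwT' : w = z₀ ∨ (w ∈ A ∧ r w z₀) := Set.mem_insert_iff.mp (hTfin.mem_toFinset.mp hwT)
  have hwS : w ∉ S := by
    rcases hwT' with rfl | ⟨⟨h1, -⟩, -⟩
    · exact hz₀
    · exact h1
  have hbelow : ∃ t ∈ S, r t w := by
    rcases hwT' with rfl | ⟨⟨-, t, ht, htw⟩, -⟩
    · exact ⟨x₀, hx₀, hr₀⟩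
    · exact ⟨t, ht, htw⟩
  refine ⟨w, hwS, hS.1.insert w, ?_⟩
  intro x hx y hy z hxz hzy
  rcases Set.mem_insert_iff.mp hx with rfl | hxS
  · rcases Set.mem_insert_iff.mp hy with rfl | hyS
    · exact absurd (htr hxz hzy) (hirr _)
    · obtain ⟨t, ht, htw⟩ := hbelow
      exact Set.mem_insert_iff.mpr (Or.inr (hS.2 t ht y hyS z (htr htw hxz) hzy))
  · rcases Set.mem_insert_iff.mp hy with rfl | hyS
    · by_cases hzS : z ∈ S
      · exact Set.mem_insert_iff.mpr (Or.inr hzS)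
      · exfalso
        have hzz₀ : r z z₀ := by
          rcases hwT' with rfl | ⟨-, hwz₀⟩
          · exact hzy
          · exact htr hzy hwz₀
        have hzT : z ∈ hTfin.toFinset :=
          hTfin.mem_toFinset.mpr (Set.mem_insert_iff.mpr (Or.inr ⟨⟨hzS, x, hxS, hxz⟩, hzz₀⟩))
        exact hwmin z hzT hzy
    · exact Set.mem_insert_iff.mpr (Or.inr (hS.2 x hxS y hyS z hxz hzy))

lemma isConvexIn_flip {S : Set α} :
    IsConvexIn (fun a b => r b a) S ↔ IsConvexIn r S :=
  ⟨fun h => ⟨h.1, fun x hx y hy z h1 h2 => h.2 y hy x hx z h2 h1⟩,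
   fun h => ⟨h.1, fun x hx y hy z h1 h2 => h.2 y hy x hx z h2 h1⟩⟩

lemma convex_extend (htr : Transitive r) (hirr : ∀ x : α, ¬ r x x)
    (hloc : ∀ x y : α, {z : α | r x z ∧ r z y}.Finite)
    {S : Set α} (hS : IsConvexIn r S) {w₀ : α} (hw₀ : w₀ ∉ S) :
    ∃ w ∉ S, IsConvexIn r (insert w S) := by
  by_cases hA : ∃ z, z ∉ S ∧ ∃ x ∈ S, r x z
  · obtain ⟨z₀, hz₀, x₀, hx₀, hr₀⟩ := hA
    exact convex_extend_one htr hirr hloc hS hx₀ hz₀ hr₀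
  · by_cases hB : ∃ z, z ∉ S ∧ ∃ x ∈ S, r z x
    · obtain ⟨z₀, hz₀, x₀, hx₀, hr₀⟩ := hB
      have htr' : Transitive (fun a b : α => r b a) := fun _ _ _ h1 h2 => htr h2 h1
      have hloc' : ∀ x y : α, {z : α | r z x ∧ r y z}.Finite := fun x y =>
        (hloc y x).subset (fun z hz => ⟨hz.2, hz.1⟩)
      obtain ⟨w, hw, hconv⟩ := convex_extend_one (r := fun a b => r b a) htr' hirr hloc'
        (isConvexIn_flip.mpr hS) hx₀ hz₀ hr₀
      exact ⟨w, hw, isConvexIn_flip.mp hconv⟩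
    · push_neg at hA hB
      refine ⟨w₀, hw₀, hS.1.insert w₀, ?_⟩
      intro x hx y hy z hxz hzy
      by_cases hzS : z ∈ S
      · exact Set.mem_insert_iff.mpr (Or.inr hzS)
      · exfalso
        rcases Set.mem_insert_iff.mp hx with rfl | hxS
        · rcases Set.mem_insert_iff.mp hy with rfl | hyS
          · exact hirr _ (htr hxz hzy)
          · exact hB z hzS y hyS hzy
        · exact hA z hzS x hxS hxz

/-- Pull back a strict order along a map from `Fin n`. -/
def pbRep (r : α → α → Prop) (htr : Transitive r) (hirr : ∀ x : α, ¬ r x x)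
    {n : ℕ} (g : Fin n → α) : FinSPO n :=
  ⟨fun a b => r (g a) (g b), fun _ _ _ h1 h2 => htr h1 h2, fun _ h => hirr _ h⟩

lemma isoFin_equiv (n : ℕ) : Equivalence (@IsoFin n) where
  refl p := ⟨Equiv.refl _, fun _ _ => Iff.rfl⟩
  symm := by
    rintro p q ⟨e, he⟩
    refine ⟨e.symm, fun a b => ?_⟩
    rw [he (e.symm a) (e.symm b), Equiv.apply_symm_apply, Equiv.apply_symm_apply]
  trans := by
    rintro p q s ⟨e1, h1⟩ ⟨e2, h2⟩
    exact ⟨e1.trans e2, fun a b => (h1 a b).trans (h2 (e1 a) (e1 b))⟩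

lemma isoFin_of_eq {n : ℕ} {p q : FinSPO n} (h : toNOrder p = toNOrder q) : IsoFin p q :=
  ((isoFin_equiv n).eqvGen_iff).mp (Quot.eq.mp h)

lemma cons_injective {n : ℕ} {w : α} {g : Fin n → α} (hg : Injective g)
    (hw : w ∉ Set.range g) : Injective (Fin.cons w g : Fin (n + 1) → α) := by
  intro a b hab
  induction a using Fin.cases with
  | zero =>
    induction b using Fin.cases with
    | zero => rfl
    | succ b =>
      simp only [Fin.cons_zero, Fin.cons_succ] at hab
      exact absurd ⟨b, hab.symm⟩ hw
  | succ a =>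
    induction b using Fin.cases with
    | zero =>
      simp only [Fin.cons_zero, Fin.cons_succ] at hab
      exact absurd ⟨a, hab⟩ hw
    | succ b =>
      simp only [Fin.cons_succ] at hab
      exact congrArg Fin.succ (hg hab)

lemma exists_not_range {m n : ℕ} (hmn : n < m) {g : Fin n → α} {f : Fin m → α}
    (hf : Injective f) : ∃ w, w ∉ Set.range g := by
  by_contra hcon
  push_neg at hcon
  have hcon' : ∀ w, ∃ i, g i = w := fun w => hcon w
  choose k hk using hcon'
  have hki : Injective (fun i : Fin m => k (f i)) := by
    intro a b hab
    apply hf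
    have := congrArg g hab
    rwa [hk, hk] at this
  have := Fintype.card_le_of_injective _ hki
  simp only [Fintype.card_fin] at this
  omega

lemma repConvex_transfer {β : Type*} {s : β → β → Prop} {e : β → α}
    (he : Function.Bijective e) (hrel : ∀ a b : β, s a b ↔ r (e a) (e b))
    {n : ℕ} {q : FinSPO n} (h : RepConvex s q) : RepConvex r q := by
  obtain ⟨h0, hinj, ⟨hfin, hconv⟩, hq⟩ := h
  refine ⟨e ∘ h0, he.1.comp hinj, ⟨?_, ?_⟩, fun a b => (hq a b).trans (hrel _ _)⟩
  · rw [Set.range_comp]; exact hfin.image e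
  · rintro _ ⟨a, rfl⟩ _ ⟨b, rfl⟩ z h1 h2
    obtain ⟨c, rfl⟩ := he.2 z
    have hc : c ∈ Set.range h0 :=
      hconv (h0 a) ⟨a, rfl⟩ (h0 b) ⟨b, rfl⟩ c ((hrel _ _).mpr h1) ((hrel _ _).mpr h2)
    obtain ⟨d, rfl⟩ := hc
    exact ⟨d, rfl⟩

lemma convexSubords_transfer {β : Type*} {s : β → β → Prop} {e : β → α}
    (he : Function.Bijective e) (hrel : ∀ a b : β, s a b ↔ r (e a) (e b)) (n : ℕ) :
    convexSubords s n = convexSubords r n := by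
  ext o
  constructor
  · rintro ⟨q, rfl, hq⟩
    exact ⟨q, rfl, repConvex_transfer he hrel hq⟩
  · rintro ⟨q, rfl, hq⟩
    refine ⟨q, rfl, repConvex_transfer (Equiv.ofBijective e he).symm.bijective
      (fun a b => ?_) hq⟩
    rw [hrel]
    rw [Equiv.ofBijective_apply_symm_apply e he, Equiv.ofBijective_apply_symm_apply e he]

lemma repConvex_trans {n m : ℕ} {p : FinSPO n} (hp : RepConvex r p)
    {q : FinSPO m} (hq : RepConvex p.1 q) : RepConvex r q := by
  obtain ⟨g, hginj, ⟨hgfin, hgconv⟩, hgrel⟩ := hp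
  obtain ⟨h0, hinj, ⟨hfin, hconv⟩, hrel⟩ := hq
  refine ⟨g ∘ h0, hginj.comp hinj, ⟨?_, ?_⟩, fun a b => (hrel a b).trans (hgrel _ _)⟩
  · rw [Set.range_comp]; exact (Set.toFinite _).image g
  · rintro _ ⟨a, rfl⟩ _ ⟨b, rfl⟩ z h1 h2
    have hz : z ∈ Set.range g := hgconv (g (h0 a)) ⟨h0 a, rfl⟩ (g (h0 b)) ⟨h0 b, rfl⟩ z h1 h2
    obtain ⟨c, rfl⟩ := hz
    have hc : c ∈ Set.range h0 :=
      hconv (h0 a) ⟨a, rfl⟩ (h0 b) ⟨b, rfl⟩ c ((hgrel _ _).mpr h1) ((hgrel _ _).mpr h2)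
    obtain ⟨d, rfl⟩ := hc
    exact ⟨d, rfl⟩

lemma repConvex_iso {n m : ℕ} {p p' : FinSPO n} (hiso : IsoFin p p')
    {q : FinSPO m} (h : RepConvex p.1 q) : RepConvex p'.1 q := by
  obtain ⟨e, he⟩ := hiso
  obtain ⟨h0, hinj, ⟨hfin, hconv⟩, hrel⟩ := h
  refine ⟨(⇑e) ∘ h0, e.injective.comp hinj, ⟨Set.toFinite _, ?_⟩,
    fun a b => (hrel a b).trans (he _ _)⟩
  rintro _ ⟨a, rfl⟩ _ ⟨b, rfl⟩ z h1 h2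
  obtain ⟨c, rfl⟩ := e.surjective z
  have hc : c ∈ Set.range h0 :=
    hconv (h0 a) ⟨a, rfl⟩ (h0 b) ⟨b, rfl⟩ c ((he _ _).mpr h1) ((he _ _).mpr h2)
  obtain ⟨d, rfl⟩ := hc
  exact ⟨d, rfl⟩

lemma convexSubords_full (htr : Transitive r) (hirr : ∀ x : α, ¬ r x x)
    {n : ℕ} {g : Fin n → α} (hg : Function.Bijective g) :
    convexSubords r n = {toNOrder (pbRep r htr hirr g)} := by
  haveI : Finite α := Finite.of_surjective g hg.2
  ext o
  constructor
  · rintro ⟨q, rfl, h0, hinj, -, hrel⟩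
    have hbij : Function.Bijective (((Equiv.ofBijective g hg).symm : α → Fin n) ∘ h0) :=
      Finite.injective_iff_bijective.mp ((Equiv.ofBijective g hg).symm.injective.comp hinj)
    refine Set.mem_singleton_iff.mpr (Quot.sound ⟨Equiv.ofBijective _ hbij, fun a b => ?_⟩)
    show q.1 a b ↔ r (g ((Equiv.ofBijective g hg).symm (h0 a)))
      (g ((Equiv.ofBijective g hg).symm (h0 b)))
    rw [Equiv.ofBijective_apply_symm_apply g hg, Equiv.ofBijective_apply_symm_apply g hg]
    exact hrel a b
  · intro ho
    rw [Set.mem_singleton_iff.mp ho]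
    refine ⟨_, rfl, g, hg.1, ⟨Set.toFinite _, ?_⟩, fun a b => Iff.rfl⟩
    intro x _ y _ z _ _
    rw [Set.range_eq_univ.mpr hg.2]
    trivial

lemma ominus_convexSubords (htr : Transitive r) (hirr : ∀ x : α, ¬ r x x)
    (hloc : ∀ x y : α, {z : α | r x z ∧ r z y}.Finite) {n : ℕ}
    (hbig : ∃ f : Fin (n + 2) → α, Function.Injective f) :
    Ominus (convexSubords r (n + 2)) = convexSubords r (n + 1) := by
  ext o
  constructor
  · rintro ⟨q, rfl, p', ⟨p'', heq, hp''⟩, hq⟩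
    exact ⟨q, rfl, repConvex_trans hp'' (repConvex_iso (isoFin_of_eq heq) hq)⟩
  · rintro ⟨q, rfl, h0, hinj, hconv, hrel⟩
    obtain ⟨f, hf⟩ := hbig
    obtain ⟨w0, hw0⟩ := exists_not_range (g := h0) (by omega) hf
    obtain ⟨w, hwS, hwconv⟩ := convex_extend htr hirr hloc hconv hw0
    set g2 : Fin (n + 2) → α := Fin.cons w h0 with hg2
    have hg2succ : ∀ a : Fin (n + 1), g2 a.succ = h0 a := fun a => by rw [hg2]; exact Fin.cons_succ (α := fun _ => α) w h0 a
    have hg2inj : Injective g2 := cons_injective hinj hwS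
    refine ⟨q, rfl, pbRep r htr hirr g2,
      ⟨pbRep r htr hirr g2, rfl, g2, hg2inj, ?_, fun a b => Iff.rfl⟩,
      Fin.succ, Fin.succ_injective _, ⟨Set.toFinite _, ?_⟩, fun a b => ?_⟩
    · rw [hg2, Fin.range_cons]; exact hwconv
    · rintro _ ⟨a, rfl⟩ _ ⟨b, rfl⟩ z h1 h2
      have h1' : r (h0 a) (g2 z) := by rw [← hg2succ a]; exact h1
      have h2' : r (g2 z) (h0 b) := by rw [← hg2succ b]; exact h2
      have hz : g2 z ∈ Set.range h0 :=
        hconv.2 (h0 a) ⟨a, rfl⟩ (h0 b) ⟨b, rfl⟩ _ h1' h2'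
      obtain ⟨c, hc⟩ := hz
      have heq : g2 z = g2 c.succ := by rw [hg2succ, hc]
      exact ⟨c, (hg2inj heq).symm⟩
    · show q.1 a b ↔ r (g2 a.succ) (g2 b.succ)
      rw [hg2succ, hg2succ]
      exact hrel a b

end Aux

/-- for a finite inextendible path `Γ_1, …, Γ_k` (`k = j + 1`,
`Γ_{m+1} = P m`), the terminal node is a singleton `{C_k}`, `C_k` is a certificate
of every node in the path, and any causet certifying every node in the path is
order-isomorphic to `C_k`: `C_k` is the unique certificate of the path. -/
theorem stmt_14 (P : ∀ m : ℕ, Set (NOrder (m + 1))) (j : ℕ) (h : FinPath P j) :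
    ∃ p : FinSPO (j + 1), P j = {toNOrder p} ∧
      (∀ m : ℕ, m ≤ j → convexSubords p.1 (m + 1) = P m) ∧
      (∀ C : Causet, (∀ m : ℕ, m ≤ j → IsCert C (P m)) → IsoToRep C p) := by
  obtain ⟨h0univ, hnode, hpath, hmax⟩ := h
  have hne : ∀ m : ℕ, m ≤ j → (P m).Nonempty := by
    intro m
    induction m with
    | zero =>
      intro _
      rw [h0univ]
      exact ⟨toNOrder ⟨fun _ _ => False, fun _ _ _ hf _ => hf.elim, fun _ hf => hf⟩,
        Set.mem_univ _⟩
    | succ m ih =>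
      intro hm
      have hlt : m < j := hm
      obtain ⟨o, ho⟩ := ih hlt.le
      rw [hpath m hlt] at ho
      obtain ⟨q, -, p', hp', -⟩ := ho
      exact ⟨toNOrder p', hp'⟩
  obtain ⟨C, hC⟩ := hnode j le_rfl
  have hsmall : ∀ C' : Causet, IsCert C' (P j) →
      ¬ ∃ f : Fin (j + 2) → C'.carrier, Function.Injective f := by
    rintro C' hC' ⟨f, hf⟩
    exact hmax ⟨convexSubords C'.rel (j + 2), ⟨C', rfl⟩, by
      rw [ominus_convexSubords C'.trans C'.irrefl C'.locFin ⟨f, hf⟩]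
      exact hC'⟩
  have hbij : ∀ C' : Causet, IsCert C' (P j) →
      ∃ q : FinSPO (j + 1), toNOrder q ∈ P j ∧ ∃ g : Fin (j + 1) → C'.carrier,
        Function.Bijective g ∧ (∀ a b, q.1 a b ↔ C'.rel (g a) (g b)) := by
    intro C' hC'
    obtain ⟨o, ho⟩ := hne j le_rfl
    rw [← hC'] at ho
    obtain ⟨q, rfl, g, hinj, hconv, hrel⟩ := ho
    have hsurj : Function.Surjective g := by
      by_contra hcon
      have hcon' : ¬ ∀ b, ∃ a, g a = b := hcon
      push_neg at hcon'
      obtain ⟨w, hw⟩ := hcon'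
      have hwr : w ∉ Set.range g := by
        rintro ⟨a, rfl⟩
        exact hw a rfl
      exact hsmall C' hC' ⟨Fin.cons w g, cons_injective hinj hwr⟩
    exact ⟨q, by rw [← hC']; exact ⟨q, rfl, g, hinj, hconv, hrel⟩, g, ⟨hinj, hsurj⟩, hrel⟩
  obtain ⟨q0, hq0mem, g, hgbij, hgrel⟩ := hbij C hC
  have hPj : P j = {toNOrder q0} := by
    rw [← hC, convexSubords_full C.trans C.irrefl hgbij,
      Set.singleton_eq_singleton_iff]
    exact Quot.sound ⟨Equiv.refl _, fun a b => (hgrel a b).symm⟩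
  have htransf : ∀ m : ℕ, convexSubords q0.1 m = convexSubords C.rel m := fun m =>
    convexSubords_transfer hgbij hgrel m
  have hkey : ∀ d m : ℕ, m + d = j → convexSubords q0.1 (m + 1) = P m := by
    intro d
    induction d with
    | zero =>
      intro m hm
      have : m = j := by omega
      subst this
      rw [htransf, hC]
    | succ d ih =>
      intro m hm
      have hlt : m < j := by omega
      rw [hpath m hlt, ← ih (m + 1) (by omega)]
      exact (ominus_convexSubords q0.2.1 q0.2.2 (fun x y => Set.toFinite _)
        ⟨Fin.castLE (by omega), Fin.castLE_injective _⟩).symm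
  refine ⟨q0, hPj, fun m hm => hkey (j - m) m (by omega), ?_⟩
  intro C' hC'
  obtain ⟨q1, hq1mem, g1, hg1bij, hg1rel⟩ := hbij C' (hC' j le_rfl)
  have heq : toNOrder q1 = toNOrder q0 := by
    rw [hPj] at hq1mem
    exact hq1mem
  obtain ⟨e, he⟩ := isoFin_of_eq heq.symm
  exact ⟨g1 ∘ ⇑e, hg1bij.comp e.bijective, fun a b => (he a b).trans (hg1rel _ _)⟩
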